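/- arXiv:2010.12952 — 3 statements merged into one kernel-verified Lean document; each statement's English description precedes it below -/
import Mathlib

section
/- Harnack-type inequality under hypothesis (H2) (Theorem 1.1, one-dimensional case). Let d = 1 and assume in addition that a is locally Lipschitz and that there exists a nondecreasing function γ : (0,∞) → (0,∞) with γ(r) ≥ r for all r > 0 such that supp ν(x,·) ⊆ B_{γ(R)} for every R > 0 and every x ∈ B_R. Then for every R > 0 there exists a constant C(R) > 0 (independent of u) such that every nonnegative continuous u : ℝ → ℝ which is twice continuously differentiable on B_{2γ̆} and satisfies I u = 0 pointwise on B_{2γ̆}, where γ̆ := γ(2R + γ(2R)), satisfies sup_{B_R} u ≤ C(R) · u(0). -/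
open MeasureTheory Metric Set

noncomputable section

/-- The nonlocal integro-differential operator `I`. -/
def Iop (d : ℕ) (a : EuclideanSpace ℝ (Fin d) → Matrix (Fin d) (Fin d) ℝ)
    (b : EuclideanSpace ℝ (Fin d) → EuclideanSpace ℝ (Fin d))
    (c : EuclideanSpace ℝ (Fin d) → ℝ)
    (ν : EuclideanSpace ℝ (Fin d) → Measure (EuclideanSpace ℝ (Fin d)))
    (f : EuclideanSpace ℝ (Fin d) → ℝ) (x : EuclideanSpace ℝ (Fin d)) : ℝ :=
  (∑ i, ∑ j, a x i j *
      fderiv ℝ (fun y => fderiv ℝ f y (EuclideanSpace.single j (1:ℝ))) x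
        (EuclideanSpace.single i (1:ℝ)))
    + fderiv ℝ f x (b x) + c x * f x + ∫ z, (f (x + z) - f x) ∂(ν x)

/-- Standing structural assumptions (Assumption 1.1 of the paper). -/
structure StandardAssumptions (d : ℕ)
    (a : EuclideanSpace ℝ (Fin d) → Matrix (Fin d) (Fin d) ℝ)
    (b : EuclideanSpace ℝ (Fin d) → EuclideanSpace ℝ (Fin d))
    (c : EuclideanSpace ℝ (Fin d) → ℝ)
    (ν : EuclideanSpace ℝ (Fin d) → Measure (EuclideanSpace ℝ (Fin d))) : Prop where
  dim_pos : 1 ≤ d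
  a_symm : ∀ x, (a x).IsSymm
  a_cont : ∀ i j, Continuous fun x => a x i j
  a_elliptic : ∀ K : Set (EuclideanSpace ℝ (Fin d)), IsCompact K → ∃ κ > (0:ℝ),
    ∀ x ∈ K, ∀ ξ : EuclideanSpace ℝ (Fin d),
      κ * ‖ξ‖ ^ 2 ≤ ∑ i, ∑ j, ξ i * a x i j * ξ j ∧
      ∑ i, ∑ j, ξ i * a x i j * ξ j ≤ κ⁻¹ * ‖ξ‖ ^ 2
  b_meas : Measurable b
  c_meas : Measurable c
  b_locBdd : ∀ K : Set (EuclideanSpace ℝ (Fin d)), IsCompact K → ∃ M, ∀ x ∈ K, ‖b x‖ ≤ M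
  c_locBdd : ∀ K : Set (EuclideanSpace ℝ (Fin d)), IsCompact K → ∃ M, ∀ x ∈ K, |c x| ≤ M
  nu_fin : ∀ x, IsFiniteMeasure (ν x)
  nu_locBdd : ∀ K : Set (EuclideanSpace ℝ (Fin d)), IsCompact K →
    ∃ M : ℝ, ∀ x ∈ K, (ν x Set.univ).toReal ≤ M
  nu_locSupp : ∀ K : Set (EuclideanSpace ℝ (Fin d)), IsCompact K →
    ∃ K₁ : Set (EuclideanSpace ℝ (Fin d)), IsCompact K₁ ∧ ∀ x ∈ K, ν x K₁ᶜ = 0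

/-- Generalized principal eigenvalue on all of `ℝ^d`. -/
def lam1 (d : ℕ) (L : (EuclideanSpace ℝ (Fin d) → ℝ) → EuclideanSpace ℝ (Fin d) → ℝ) : EReal :=
  sSup (Real.toEReal '' {l : ℝ | ∃ φ : EuclideanSpace ℝ (Fin d) → ℝ,
    ContDiff ℝ 2 φ ∧ (∀ x, 0 < φ x) ∧ ∀ x, L φ x + l * φ x ≤ 0})

/-- Dirichlet principal eigenvalue on an open set `D`. -/
def lamD (d : ℕ) (L : (EuclideanSpace ℝ (Fin d) → ℝ) → EuclideanSpace ℝ (Fin d) → ℝ)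
    (D : Set (EuclideanSpace ℝ (Fin d))) : EReal :=
  sSup (Real.toEReal '' {l : ℝ | ∃ φ : EuclideanSpace ℝ (Fin d) → ℝ,
    Continuous φ ∧ (∀ x, 0 ≤ φ x) ∧ ContDiffOn ℝ 2 φ D ∧ (∀ x ∈ D, 0 < φ x) ∧
    ∀ x ∈ D, L φ x + l * φ x ≤ 0})

/-- The eigenvalue `λ'₁`. -/
def lamP1 (d : ℕ) (L : (EuclideanSpace ℝ (Fin d) → ℝ) → EuclideanSpace ℝ (Fin d) → ℝ) : EReal :=
  sInf (Real.toEReal '' {l : ℝ | ∃ φ : EuclideanSpace ℝ (Fin d) → ℝ,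
    ContDiff ℝ 2 φ ∧ (∀ x, 0 < φ x) ∧ BddAbove (Set.range φ) ∧ ∀ x, 0 ≤ L φ x + l * φ x})

/-- The eigenvalue `λ''₁`. -/
def lamPP1 (d : ℕ) (L : (EuclideanSpace ℝ (Fin d) → ℝ) → EuclideanSpace ℝ (Fin d) → ℝ) : EReal :=
  sSup (Real.toEReal '' {l : ℝ | ∃ φ : EuclideanSpace ℝ (Fin d) → ℝ,
    ContDiff ℝ 2 φ ∧ (∃ δ > (0:ℝ), ∀ x, δ ≤ φ x) ∧ ∀ x, L φ x + l * φ x ≤ 0})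

/-- The eigenvalue `λ''(L, D)` for an open set `D`. -/
def lamPPD (d : ℕ) (L : (EuclideanSpace ℝ (Fin d) → ℝ) → EuclideanSpace ℝ (Fin d) → ℝ)
    (D : Set (EuclideanSpace ℝ (Fin d))) : EReal :=
  sSup (Real.toEReal '' {l : ℝ | ∃ φ : EuclideanSpace ℝ (Fin d) → ℝ,
    Continuous φ ∧ ContDiffOn ℝ 2 φ D ∧ (∃ δ > (0:ℝ), ∀ x, δ ≤ φ x) ∧
    ∀ x ∈ D, L φ x + l * φ x ≤ 0})

/-- `L` satisfies the maximum principle on `ℝ^d`. -/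
def MaxPrinciple (d : ℕ)
    (L : (EuclideanSpace ℝ (Fin d) → ℝ) → EuclideanSpace ℝ (Fin d) → ℝ) : Prop :=
  ∀ u : EuclideanSpace ℝ (Fin d) → ℝ, ContDiff ℝ 2 u → (∀ x, 0 ≤ L u x) →
    BddAbove (Set.range u) → ∀ x, u x ≤ 0

/-- Growth condition (E_growth). -/
def EGrowth (d : ℕ) (a : EuclideanSpace ℝ (Fin d) → Matrix (Fin d) (Fin d) ℝ)
    (b : EuclideanSpace ℝ (Fin d) → EuclideanSpace ℝ (Fin d))
    (c : EuclideanSpace ℝ (Fin d) → ℝ) : Prop :=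
  (∃ M, ∀ x, c x ≤ M) ∧
  (∃ M, ∀ x, ‖(Matrix.toEuclideanCLM (𝕜 := ℝ) (a x) :
      EuclideanSpace ℝ (Fin d) →L[ℝ] EuclideanSpace ℝ (Fin d))‖ ≤ M) ∧
  (∃ M, ∀ x : EuclideanSpace ℝ (Fin d), x ≠ 0 → (inner ℝ (b x) x : ℝ) / ‖x‖ ≤ M)

/-- Growth condition (P_growth). -/
def PGrowth (d : ℕ) (a : EuclideanSpace ℝ (Fin d) → Matrix (Fin d) (Fin d) ℝ)
    (b : EuclideanSpace ℝ (Fin d) → EuclideanSpace ℝ (Fin d))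
    (c : EuclideanSpace ℝ (Fin d) → ℝ) : Prop :=
  (∃ M, ∀ x, c x ≤ M) ∧
  (∃ M R, ∀ x : EuclideanSpace ℝ (Fin d), R ≤ ‖x‖ →
    ‖(Matrix.toEuclideanCLM (𝕜 := ℝ) (a x) :
      EuclideanSpace ℝ (Fin d) →L[ℝ] EuclideanSpace ℝ (Fin d))‖ / ‖x‖ ^ 2 ≤ M) ∧
  (∃ M R, ∀ x : EuclideanSpace ℝ (Fin d), R ≤ ‖x‖ → (inner ℝ (b x) x : ℝ) / ‖x‖ ^ 2 ≤ M)



/-!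
In dimension one, `I u = 0` with `u ≥ 0` makes `U t = u (t • e₀)` a supersolution of the local
equation, `A U'' + B U' ≤ M U` on `[-2R, 2R]`, because the jump term is at least `-ν(x) u(x)`.
For `0 ≤ x ≤ R` compare `U` on `[-2R, x]` with the barrier `c (exp (l (t + 2R)) - 1)`: it vanishes
at `-2R`, equals `U x` at `x`, and for `l` large it is a strict subsolution, so by the maximum
principle it stays below `U`; at `t = 0` this reads
`U x ≤ (exp (l (x + 2R)) - 1) / (exp (2lR) - 1) · U 0`. Negative `x` follow by reflection.
-/

open Filter Topology Real

theorem IsLocalMax.deriv_deriv_nonpos {f : ℝ → ℝ} {x₀ : ℝ} (h : IsLocalMax f x₀)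
    (hc : ContinuousAt f x₀) : deriv (deriv f) x₀ ≤ 0 := by
  by_contra! hpos
  have hmin := isLocalMin_of_deriv_deriv_pos hpos h.deriv_eq_zero hc
  have hconst : f =ᶠ[𝓝 x₀] fun _ => f x₀ := by
    filter_upwards [h, hmin] with y hmax hmin using le_antisymm hmax hmin
  rw [hconst.deriv.deriv_eq] at hpos
  simp at hpos

/-- No differentiability of `w` is assumed: at an interior maximum of a continuous `w`,
`deriv w = 0` and `deriv (deriv w) ≤ 0` hold even where `deriv` takes junk values. -/
theorem nonpos_of_strict_subsolution {A B w : ℝ → ℝ} {M α β : ℝ} (hM : 0 ≤ M)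
    (hA : ∀ t ∈ Ioo α β, 0 ≤ A t) (hw : ContinuousOn w (Icc α β)) (hα : w α ≤ 0) (hβ : w β ≤ 0)
    (hL : ∀ t ∈ Ioo α β, M * w t < A t * deriv (deriv w) t + B t * deriv w t) :
    ∀ t ∈ Icc α β, w t ≤ 0 := by
  by_contra! ⟨t₀, ht₀, hpos⟩
  obtain ⟨t, ht, hmax⟩ := isCompact_Icc.exists_isMaxOn ⟨t₀, ht₀⟩ hw
  have hwt : 0 < w t := hpos.trans_le (hmax ht₀)
  have ht' : t ∈ Ioo α β :=
    ⟨ht.1.lt_of_ne (by rintro rfl; linarith), ht.2.lt_of_ne (by rintro rfl; linarith)⟩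
  have hloc : IsLocalMax w t := hmax.isLocalMax (Icc_mem_nhds ht'.1 ht'.2)
  have hw₂ := hloc.deriv_deriv_nonpos (hw.continuousAt (Icc_mem_nhds ht'.1 ht'.2))
  have := hL t ht'
  rw [hloc.deriv_eq_zero, mul_zero, add_zero] at this
  nlinarith [mul_nonpos_of_nonneg_of_nonpos (hA t ht') hw₂, mul_nonneg hM hwt.le]

theorem exists_pos_mul_add_lt_mul_sq {κ : ℝ} (hκ : 0 < κ) (M : ℝ) :
    ∃ l > 0, M * l + M < κ * l ^ 2 := by
  refine ⟨(2 * |M| + 1) / κ + 1, by positivity, ?_⟩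
  have hl : κ * ((2 * |M| + 1) / κ + 1) = 2 * |M| + 1 + κ := by field_simp
  have h1 : 1 ≤ (2 * |M| + 1) / κ + 1 := by linarith [show 0 ≤ (2 * |M| + 1) / κ by positivity]
  nlinarith [le_abs_self M, abs_nonneg M]

def expBarrier (c l α t : ℝ) : ℝ := c * (exp (l * (t - α)) - 1)

theorem hasDerivAt_expBarrier (c l α t : ℝ) :
    HasDerivAt (expBarrier c l α) (c * l * exp (l * (t - α))) t :=
  (((((hasDerivAt_id' t).sub_const α).const_mul l).exp.sub_const 1).const_mul c).congr_deriv
    (by ring)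

theorem deriv_expBarrier (c l α : ℝ) :
    deriv (expBarrier c l α) = fun t => c * l * exp (l * (t - α)) :=
  funext fun t => (hasDerivAt_expBarrier c l α t).deriv

theorem deriv_deriv_expBarrier (c l α t : ℝ) :
    deriv (deriv (expBarrier c l α)) t = c * l ^ 2 * exp (l * (t - α)) := by
  have h := (((hasDerivAt_id' t).sub_const α).const_mul l).exp.const_mul (c * l)
  rw [deriv_expBarrier, h.deriv]
  ring

theorem expBarrier_strict_subsolution {c l α κ M a b t : ℝ} (hc : 0 < c) (hl : 0 < l)
    (hM : 0 ≤ M) (hlM : M * l + M < κ * l ^ 2) (ha : κ ≤ a) (hb : |b| ≤ M) :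
    M * expBarrier c l α t <
      a * deriv (deriv (expBarrier c l α)) t + b * deriv (expBarrier c l α) t := by
  rw [deriv_deriv_expBarrier, deriv_expBarrier, expBarrier]
  have hE := exp_pos (l * (t - α))
  have hcE := mul_pos hc hE
  have hal : κ * l ^ 2 * (c * exp (l * (t - α))) ≤ a * l ^ 2 * (c * exp (l * (t - α))) := by
    gcongr
  have hbl : -M * l * (c * exp (l * (t - α))) ≤ b * l * (c * exp (l * (t - α))) := by
    gcongr
    exact neg_le_of_abs_le hb
  nlinarith [mul_lt_mul_of_pos_right hlM hcE, mul_nonneg hM hc.le]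

section Supersolution

structure IsSupersolutionOn (A B : ℝ → ℝ) (M : ℝ) (U : ℝ → ℝ) (α β : ℝ) : Prop where
  differentiableAt : ∀ t ∈ Icc α β, DifferentiableAt ℝ U t
  differentiableAt_deriv : ∀ t ∈ Ioo α β, DifferentiableAt ℝ (deriv U) t
  le : ∀ t ∈ Ioo α β, A t * deriv (deriv U) t + B t * deriv U t ≤ M * U t

variable {A B U : ℝ → ℝ} {M α β : ℝ}

theorem IsSupersolutionOn.mono (hU : IsSupersolutionOn A B M U α β) {α' β' : ℝ} (hα : α ≤ α')
    (hβ : β' ≤ β) : IsSupersolutionOn A B M U α' β' where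
  differentiableAt t ht := hU.differentiableAt t (Icc_subset_Icc hα hβ ht)
  differentiableAt_deriv t ht := hU.differentiableAt_deriv t (Ioo_subset_Ioo hα hβ ht)
  le t ht := hU.le t (Ioo_subset_Ioo hα hβ ht)

theorem IsSupersolutionOn.comp_neg (hU : IsSupersolutionOn A B M U α β) :
    IsSupersolutionOn (fun t => A (-t)) (fun t => -B (-t)) M (fun t => U (-t)) (-β) (-α) := by
  have hderiv : deriv (fun t => U (-t)) = fun t => -deriv U (-t) := funext (deriv_comp_neg U)
  refine ⟨fun t ht => ?_, fun t ht => ?_, fun t ht => ?_⟩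
  · exact (hU.differentiableAt (-t) (neg_mem_Icc_iff.2 ht)).comp t differentiableAt_id.neg
  · rw [hderiv]
    exact ((hU.differentiableAt_deriv (-t) (neg_mem_Ioo_iff.2 ht)).comp t
      differentiableAt_id.neg).neg
  · have := hU.le (-t) (neg_mem_Ioo_iff.2 ht)
    simp only [hderiv, deriv.fun_neg, deriv_comp_neg, neg_neg]
    linarith

theorem IsSupersolutionOn.expBarrier_le (hU : IsSupersolutionOn A B M U α β) {κ c l : ℝ}
    (hc : 0 < c) (hl : 0 < l) (hM : 0 ≤ M) (hlM : M * l + M < κ * l ^ 2)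
    (hA : ∀ t ∈ Ioo α β, κ ≤ A t) (hB : ∀ t ∈ Ioo α β, |B t| ≤ M)
    (hα : 0 ≤ U α) (hβ : expBarrier c l α β ≤ U β) :
    ∀ t ∈ Icc α β, expBarrier c l α t ≤ U t := by
  have hκ : 0 < κ := by nlinarith
  have hψ : Differentiable ℝ (expBarrier c l α) := fun t =>
    (hasDerivAt_expBarrier c l α t).differentiableAt
  have hψ' : Differentiable ℝ (deriv (expBarrier c l α)) := by
    rw [deriv_expBarrier]
    fun_prop
  have hcont : ContinuousOn (fun t => expBarrier c l α t - U t) (Icc α β) :=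
    hψ.continuous.continuousOn.sub fun t ht =>
      (hU.differentiableAt t ht).continuousAt.continuousWithinAt
  have hmax := nonpos_of_strict_subsolution (A := A) (B := B) hM
    (fun t ht => hκ.le.trans (hA t ht)) hcont (by simp [expBarrier, hα]) (by linarith) ?_
  · exact fun t ht => sub_nonpos.1 (hmax t ht)
  intro t ht
  have hd : deriv (fun s => expBarrier c l α s - U s) =ᶠ[𝓝 t]
      fun s => deriv (expBarrier c l α) s - deriv U s := by
    filter_upwards [isOpen_Ioo.mem_nhds ht] with s hs
    exact deriv_fun_sub (hψ s) (hU.differentiableAt s (Ioo_subset_Icc_self hs))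
  rw [hd.deriv_eq, hd.eq_of_nhds, deriv_fun_sub (hψ' t) (hU.differentiableAt_deriv t ht)]
  have hψt := expBarrier_strict_subsolution (t := t) (α := α) hc hl hM hlM (hA t ht) (hB t ht)
  nlinarith [hU.le t ht]

theorem IsSupersolutionOn.harnack_of_nonneg (hU : IsSupersolutionOn A B M U α β) {κ l x : ℝ}
    (hl : 0 < l) (hM : 0 ≤ M) (hlM : M * l + M < κ * l ^ 2)
    (hA : ∀ t ∈ Ioo α β, κ ≤ A t) (hB : ∀ t ∈ Ioo α β, |B t| ≤ M)
    (hU₀ : ∀ t ∈ Icc α β, 0 ≤ U t) (hα : α < 0) (hx₀ : 0 ≤ x) (hxβ : x ≤ β) :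
    U x * (exp (l * -α) - 1) ≤ (exp (l * (x - α)) - 1) * U 0 := by
  have hD : 0 < exp (l * (x - α)) - 1 := sub_pos.2 (one_lt_exp_iff.2 (by nlinarith))
  have h0 : (0 : ℝ) ∈ Icc α x := ⟨hα.le, hx₀⟩
  rcases (hU₀ x ⟨hα.le.trans hx₀, hxβ⟩).eq_or_lt with hUx | hUx
  · rw [← hUx, zero_mul]
    exact mul_nonneg hD.le (hU₀ 0 ⟨hα.le, hx₀.trans hxβ⟩)
  -- the barrier through `(α, 0)` and `(x, U x)`
  have hbar := (hU.mono le_rfl hxβ).expBarrier_le (div_pos hUx hD) hl hM hlM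
    (fun t ht => hA t ⟨ht.1, ht.2.trans_le hxβ⟩) (fun t ht => hB t ⟨ht.1, ht.2.trans_le hxβ⟩)
    (hU₀ α ⟨le_rfl, (hα.trans_le hx₀).le.trans hxβ⟩)
    (by rw [expBarrier, div_mul_cancel₀ _ hD.ne']) 0 h0
  rw [expBarrier, zero_sub] at hbar
  calc U x * (exp (l * -α) - 1)
      = (exp (l * (x - α)) - 1) * (U x / (exp (l * (x - α)) - 1) * (exp (l * -α) - 1)) := by
        field_simp
    _ ≤ (exp (l * (x - α)) - 1) * U 0 := mul_le_mul_of_nonneg_left hbar hD.le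

theorem IsSupersolutionOn.harnack {ρ κ l R x : ℝ} (hU : IsSupersolutionOn A B M U (-ρ) ρ)
    (hl : 0 < l) (hM : 0 ≤ M) (hlM : M * l + M < κ * l ^ 2) (hA : ∀ t ∈ Ioo (-ρ) ρ, κ ≤ A t)
    (hB : ∀ t ∈ Ioo (-ρ) ρ, |B t| ≤ M) (hU₀ : ∀ t ∈ Icc (-ρ) ρ, 0 ≤ U t) (hRρ : R < ρ)
    (hx : |x| ≤ R) : U x ≤ (exp (l * (R + ρ)) - 1) / (exp (l * ρ) - 1) * U 0 := by
  have hρ : 0 < ρ := (abs_nonneg x).trans_lt (hx.trans_lt hRρ)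
  have hD : 0 < exp (l * ρ) - 1 := sub_pos.2 (one_lt_exp_iff.2 (mul_pos hl hρ))
  suffices h : U x * (exp (l * ρ) - 1) ≤ (exp (l * (|x| + ρ)) - 1) * U 0 by
    rw [div_mul_eq_mul_div, le_div_iff₀ hD]
    refine h.trans (mul_le_mul_of_nonneg_right ?_ (hU₀ 0 ⟨by linarith, hρ.le⟩))
    gcongr
  rcases le_or_gt 0 x with hx₀ | hx₀
  · simpa [abs_of_nonneg hx₀] using
      hU.harnack_of_nonneg hl hM hlM hA hB hU₀ (neg_lt_zero.2 hρ) hx₀ (by linarith [le_abs_self x])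
  · have := hU.comp_neg.harnack_of_nonneg hl hM hlM (fun t ht => hA (-t) (neg_mem_Ioo_iff.2 ht))
      (fun t ht => (abs_neg (B (-t))).trans_le (hB (-t) (neg_mem_Ioo_iff.2 ht)))
      (fun t ht => hU₀ (-t) (neg_mem_Icc_iff.2 ht)) (neg_lt_zero.2 hρ) (neg_nonneg.2 hx₀.le)
      (by linarith [neg_abs_le x])
    simpa [abs_of_neg hx₀, add_comm] using this

end Supersolution

theorem neg_measureReal_mul_le_integral_sub {Ω : Type*} [MeasurableSpace Ω] (μ : Measure Ω)
    [IsFiniteMeasure μ] {f : Ω → ℝ} (hf : ∀ z, 0 ≤ f z) {y : ℝ} (hy : 0 ≤ y) :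
    -(μ.real univ * y) ≤ ∫ z, (f z - y) ∂μ := by
  by_cases hI : Integrable (fun z => f z - y) μ
  · have hfI : Integrable f μ :=
      (hI.add (integrable_const y)).congr (.of_forall fun z => sub_add_cancel (f z) y)
    rw [integral_sub hfI (integrable_const y), integral_const, smul_eq_mul]
    linarith [integral_nonneg (μ := μ) (f := f) hf]
  · rw [integral_undef hI, neg_nonpos]
    positivity

theorem Iop_local_le_of_eq_zero {d : ℕ} (a : EuclideanSpace ℝ (Fin d) → Matrix (Fin d) (Fin d) ℝ)
    (b : EuclideanSpace ℝ (Fin d) → EuclideanSpace ℝ (Fin d)) (c : EuclideanSpace ℝ (Fin d) → ℝ)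
    (ν : EuclideanSpace ℝ (Fin d) → Measure (EuclideanSpace ℝ (Fin d)))
    {u : EuclideanSpace ℝ (Fin d) → ℝ} {x : EuclideanSpace ℝ (Fin d)} [IsFiniteMeasure (ν x)]
    (hu : ∀ y, 0 ≤ u y) (h : Iop d a b c ν u x = 0) :
    (∑ i, ∑ j, a x i j *
        fderiv ℝ (fun y => fderiv ℝ u y (EuclideanSpace.single j (1:ℝ))) x
          (EuclideanSpace.single i (1:ℝ))) + fderiv ℝ u x (b x) ≤
      (|c x| + (ν x).real univ) * u x := by
  have hν := neg_measureReal_mul_le_integral_sub (ν x) (fun z => hu (x + z)) (hu x)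
  have hc := mul_le_mul_of_nonneg_right (neg_abs_le (c x)) (hu x)
  rw [Iop] at h
  linarith

section Line

variable {E : Type*} [NormedAddCommGroup E] [NormedSpace ℝ E] {u : E → ℝ} {v : E} {t : ℝ}

theorem hasDerivAt_comp_smul_const (hu : DifferentiableAt ℝ u (t • v)) :
    HasDerivAt (fun s : ℝ => u (s • v)) (fderiv ℝ u (t • v) v) t := by
  have h := hu.hasFDerivAt.comp_hasDerivAt t ((hasDerivAt_id' t).smul_const v)
  rw [one_smul] at h
  exact h

theorem hasDerivAt_deriv_comp_smul_const {S : Set E} (hS : IsOpen S) (hu : ContDiffOn ℝ 2 u S)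
    (ht : t • v ∈ S) :
    HasDerivAt (deriv fun s : ℝ => u (s • v)) (fderiv ℝ (fun y => fderiv ℝ u y v) (t • v) v) t := by
  have hdiff : ∀ y ∈ S, DifferentiableAt ℝ u y := fun y hy =>
    (hu.differentiableOn (by norm_num) y hy).differentiableAt (hS.mem_nhds hy)
  have hev : deriv (fun s : ℝ => u (s • v)) =ᶠ[𝓝 t] fun s => fderiv ℝ u (s • v) v := by
    filter_upwards [(hS.preimage (continuous_id.smul continuous_const)).mem_nhds ht] with s hs
    exact (hasDerivAt_comp_smul_const (hdiff _ hs)).deriv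
  have hu' := hu.fderiv_of_isOpen hS (m := 1) (by norm_num)
  refine (hasDerivAt_comp_smul_const ?_).congr_of_eventuallyEq hev
  exact ((hu'.differentiableOn one_ne_zero _ ht).differentiableAt (hS.mem_nhds ht)).clm_apply
    (differentiableAt_const v)

end Line

local notation "e₀" => EuclideanSpace.single (0 : Fin 1) (1 : ℝ)

theorem EuclideanSpace.eq_apply_zero_smul_single (x : EuclideanSpace ℝ (Fin 1)) : x = x 0 • e₀ := by
  ext i
  fin_cases i
  simp

theorem EuclideanSpace.norm_eq_abs_apply_zero (x : EuclideanSpace ℝ (Fin 1)) : ‖x‖ = |x 0| := by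
  simp [EuclideanSpace.norm_eq, Real.sqrt_sq_eq_abs]

theorem EuclideanSpace.smul_single_mem_closedBall {t ρ : ℝ} (ht : t ∈ Icc (-ρ) ρ) :
    t • e₀ ∈ closedBall (0 : EuclideanSpace ℝ (Fin 1)) ρ := by
  simpa [norm_smul] using abs_le.2 ht

theorem StandardAssumptions.exists_coeff_bounds
    {a : EuclideanSpace ℝ (Fin 1) → Matrix (Fin 1) (Fin 1) ℝ}
    {b : EuclideanSpace ℝ (Fin 1) → EuclideanSpace ℝ (Fin 1)} {c : EuclideanSpace ℝ (Fin 1) → ℝ}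
    {ν : EuclideanSpace ℝ (Fin 1) → Measure (EuclideanSpace ℝ (Fin 1))}
    (H : StandardAssumptions 1 a b c ν) {K : Set (EuclideanSpace ℝ (Fin 1))} (hK : IsCompact K) :
    ∃ κ > 0, ∃ M ≥ 0, ∀ x ∈ K,
      κ ≤ a x 0 0 ∧ |b x 0| ≤ M ∧ |c x| + (ν x).real univ ≤ M := by
  obtain ⟨κ, hκ, hell⟩ := H.a_elliptic K hK
  obtain ⟨Mb, hMb⟩ := H.b_locBdd K hK
  obtain ⟨Mc, hMc⟩ := H.c_locBdd K hK
  obtain ⟨Mν, hMν⟩ := H.nu_locBdd K hK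
  refine ⟨κ, hκ, max (max Mb (Mc + Mν)) 0, le_max_right _ _, fun x hx => ⟨?_, ?_, ?_⟩⟩
  · simpa using (hell x hx e₀).1
  · rw [← EuclideanSpace.norm_eq_abs_apply_zero]
    exact (hMb x hx).trans ((le_max_left _ _).trans (le_max_left _ _))
  · have := add_le_add (hMc x hx) (hMν x hx)
    exact this.trans ((le_max_right _ _).trans (le_max_left _ _))

theorem isSupersolutionOn_of_Iop_eq_zero
    {a : EuclideanSpace ℝ (Fin 1) → Matrix (Fin 1) (Fin 1) ℝ}
    {b : EuclideanSpace ℝ (Fin 1) → EuclideanSpace ℝ (Fin 1)} {c : EuclideanSpace ℝ (Fin 1) → ℝ}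
    {ν : EuclideanSpace ℝ (Fin 1) → Measure (EuclideanSpace ℝ (Fin 1))}
    (H : StandardAssumptions 1 a b c ν) {M ρ r : ℝ}
    (hM : ∀ x ∈ closedBall 0 ρ, |c x| + (ν x).real univ ≤ M) (hρr : ρ < r)
    {u : EuclideanSpace ℝ (Fin 1) → ℝ} (hu₀ : ∀ x, 0 ≤ u x) (hu₂ : ContDiffOn ℝ 2 u (ball 0 r))
    (hI : ∀ x ∈ ball 0 r, Iop 1 a b c ν u x = 0) :
    IsSupersolutionOn (fun t => a (t • e₀) 0 0) (fun t => b (t • e₀) 0) M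
      (fun t => u (t • e₀)) (-ρ) ρ := by
  have hball : ∀ t ∈ Icc (-ρ) ρ, t • e₀ ∈ ball (0 : EuclideanSpace ℝ (Fin 1)) r := fun t ht =>
    closedBall_subset_ball hρr (EuclideanSpace.smul_single_mem_closedBall ht)
  have hderiv₁ := fun t ht => hasDerivAt_comp_smul_const (v := e₀)
    ((hu₂.differentiableOn (by norm_num) _ (hball t ht)).differentiableAt
      (isOpen_ball.mem_nhds (hball t ht)))
  have hderiv₂ := fun t ht => hasDerivAt_deriv_comp_smul_const isOpen_ball hu₂ (hball t ht)
  refine ⟨fun t ht => (hderiv₁ t ht).differentiableAt,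
    fun t ht => (hderiv₂ t (Ioo_subset_Icc_self ht)).differentiableAt, fun t ht => ?_⟩
  have ht' := Ioo_subset_Icc_self ht
  have := H.nu_fin (t • e₀)
  have hloc := Iop_local_le_of_eq_zero a b c ν hu₀ (hI _ (hball t ht'))
  simp only [Fin.sum_univ_one] at hloc
  rw [(hderiv₂ t ht').deriv, (hderiv₁ t ht').deriv]
  conv_lhs at hloc =>
    rw [EuclideanSpace.eq_apply_zero_smul_single (b (t • e₀)), map_smul, smul_eq_mul]
  nlinarith [mul_le_mul_of_nonneg_right (hM _ (EuclideanSpace.smul_single_mem_closedBall ht'))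
    (hu₀ (t • e₀))]

theorem harnack_H2_general (a : EuclideanSpace ℝ (Fin 1) → Matrix (Fin 1) (Fin 1) ℝ)
    (b : EuclideanSpace ℝ (Fin 1) → EuclideanSpace ℝ (Fin 1))
    (c : EuclideanSpace ℝ (Fin 1) → ℝ)
    (ν : EuclideanSpace ℝ (Fin 1) → Measure (EuclideanSpace ℝ (Fin 1)))
    (H : StandardAssumptions 1 a b c ν)
    (γ : ℝ → ℝ)
    (hγ_ge : ∀ r : ℝ, 0 < r → r ≤ γ r) :
    ∀ R : ℝ, 0 < R → ∃ C : ℝ, 0 < C ∧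
      ∀ u : EuclideanSpace ℝ (Fin 1) → ℝ, Continuous u → (∀ x, 0 ≤ u x) →
        ContDiffOn ℝ 2 u (ball (0 : EuclideanSpace ℝ (Fin 1)) (2 * γ (2 * R + γ (2 * R)))) →
        (∀ x ∈ ball (0 : EuclideanSpace ℝ (Fin 1)) (2 * γ (2 * R + γ (2 * R))),
          Iop 1 a b c ν u x = 0) →
        ∀ x ∈ ball (0 : EuclideanSpace ℝ (Fin 1)) R, u x ≤ C * u 0 := by
  intro R hR
  obtain ⟨κ, hκ, M, hM, hbd⟩ := H.exists_coeff_bounds (isCompact_closedBall 0 (2 * R))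
  obtain ⟨l, hl, hlM⟩ := exists_pos_mul_add_lt_mul_sq hκ M
  refine ⟨(exp (l * (R + 2 * R)) - 1) / (exp (l * (2 * R)) - 1),
    div_pos (sub_pos.2 (one_lt_exp_iff.2 (by positivity)))
      (sub_pos.2 (one_lt_exp_iff.2 (by positivity))), ?_⟩
  intro u _ hu₀ hu₂ hI x hx
  have hγ₁ := hγ_ge (2 * R) (by positivity)
  have hγ₂ := hγ_ge (2 * R + γ (2 * R)) (by linarith)
  have hU := isSupersolutionOn_of_Iop_eq_zero H (fun y hy => (hbd y hy).2.2)
    (by linarith : 2 * R < 2 * γ (2 * R + γ (2 * R))) hu₀ hu₂ hI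
  have hmem := fun t (ht : t ∈ Ioo (-(2 * R)) (2 * R)) =>
    EuclideanSpace.smul_single_mem_closedBall (Ioo_subset_Icc_self ht)
  have hx' : |x 0| ≤ R := by
    rw [← EuclideanSpace.norm_eq_abs_apply_zero]
    exact (mem_ball_zero_iff.1 hx).le
  have := hU.harnack hl hM hlM (fun t ht => (hbd _ (hmem t ht)).1)
    (fun t ht => (hbd _ (hmem t ht)).2.1) (fun t _ => hu₀ _) (by linarith) hx'
  rwa [← EuclideanSpace.eq_apply_zero_smul_single, zero_smul] at this

/-- Theorem 1.1 under (H2): Harnack-type inequality in dimension one. -/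
theorem harnack_H2 (a : EuclideanSpace ℝ (Fin 1) → Matrix (Fin 1) (Fin 1) ℝ)
    (b : EuclideanSpace ℝ (Fin 1) → EuclideanSpace ℝ (Fin 1))
    (c : EuclideanSpace ℝ (Fin 1) → ℝ)
    (ν : EuclideanSpace ℝ (Fin 1) → Measure (EuclideanSpace ℝ (Fin 1)))
    (H : StandardAssumptions 1 a b c ν)
    (haLip : ∀ K : Set (EuclideanSpace ℝ (Fin 1)), IsCompact K →
      ∃ L : ℝ, ∀ i j, ∀ x ∈ K, ∀ y ∈ K, |a x i j - a y i j| ≤ L * dist x y)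
    (γ : ℝ → ℝ)
    (hγ_mono : ∀ r s : ℝ, 0 < r → r ≤ s → γ r ≤ γ s)
    (hγ_ge : ∀ r : ℝ, 0 < r → r ≤ γ r)
    (hsupp : ∀ R : ℝ, 0 < R → ∀ x ∈ ball (0 : EuclideanSpace ℝ (Fin 1)) R,
      ν x (ball (0 : EuclideanSpace ℝ (Fin 1)) (γ R))ᶜ = 0) :
    ∀ R : ℝ, 0 < R → ∃ C : ℝ, 0 < C ∧
      ∀ u : EuclideanSpace ℝ (Fin 1) → ℝ, Continuous u → (∀ x, 0 ≤ u x) →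
        ContDiffOn ℝ 2 u (ball (0 : EuclideanSpace ℝ (Fin 1)) (2 * γ (2 * R + γ (2 * R)))) →
        (∀ x ∈ ball (0 : EuclideanSpace ℝ (Fin 1)) (2 * γ (2 * R + γ (2 * R))),
          Iop 1 a b c ν u x = 0) →
        ∀ x ∈ ball (0 : EuclideanSpace ℝ (Fin 1)) R, u x ≤ C * u 0 :=
  harnack_H2_general a b c ν H γ hγ_ge

end
end

section
/- Equivalent definition of λ''(I,D) for potentials bounded above (Remark after Theorem 2.3). Let D ⊆ ℝ^d be open with sup_{x∈D} c(x) < ∞. Then λ''(I, D) = sup{λ ∈ ℝ : there is a nonnegative continuous φ : ℝ^d → ℝ, twice continuously differentiable on D, with inf_D φ > 0 and Iφ + λφ ≤ 0 on D}, i.e., in the definition of λ''(I,D) the requirement inf_{ℝ^d} φ > 0 may be relaxed to φ ≥ 0 on ℝ^d and inf_D φ > 0 without changing the value (equality in the extended reals). -/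
/-!
Adding a constant `ε > 0` to a relaxed test function `φ` makes it bounded below by `ε` on all of
`ℝ^d`, and `I(φ + ε) + r(φ + ε) = (Iφ + lφ) - (l - r)φ + (c + r)ε` on `D`. Since `c` is bounded
above on `D` and `φ ≥ δ > 0` there, this is `≤ 0` once `ε` is small, so every `r < l` is admissible
in the original definition and the two suprema coincide.
-/

open MeasureTheory Metric Set

noncomputable section

theorem EReal.sSup_image_coe_eq_of_subset_of_forall_lt {S T : Set ℝ} (hST : S ⊆ T)
    (hTS : ∀ t ∈ T, ∀ r < t, r ∈ S) :
    sSup (Real.toEReal '' S) = sSup (Real.toEReal '' T) := by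
  refine le_antisymm (sSup_le_sSup (image_mono hST)) (sSup_le ?_)
  rintro _ ⟨t, ht, rfl⟩
  refine le_of_forall_lt_imp_le_of_dense fun w hw => ?_
  obtain ⟨r, hwr, hrt⟩ := EReal.exists_between_coe_real hw
  exact hwr.le.trans (le_sSup ⟨r, hTS t ht r (EReal.coe_lt_coe_iff.mp hrt), rfl⟩)

section

variable {d : ℕ} {a : EuclideanSpace ℝ (Fin d) → Matrix (Fin d) (Fin d) ℝ}
  {b : EuclideanSpace ℝ (Fin d) → EuclideanSpace ℝ (Fin d)} {c : EuclideanSpace ℝ (Fin d) → ℝ}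
  {ν : EuclideanSpace ℝ (Fin d) → Measure (EuclideanSpace ℝ (Fin d))}

theorem Iop_add_const (φ : EuclideanSpace ℝ (Fin d) → ℝ) (ε : ℝ) (x : EuclideanSpace ℝ (Fin d)) :
    Iop d a b c ν (fun y => φ y + ε) x = Iop d a b c ν φ x + c x * ε := by
  have hfderiv : ∀ y, fderiv ℝ (fun w => φ w + ε) y = fderiv ℝ φ y := fun _ => fderiv_add_const ε
  simp only [Iop, hfderiv, add_sub_add_right_eq_sub]
  ring

theorem exists_pos_Iop_add_const_add_mul_nonpos {D : Set (EuclideanSpace ℝ (Fin d))}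
    {φ : EuclideanSpace ℝ (Fin d) → ℝ} {M δ l r : ℝ} (hM : ∀ x ∈ D, c x ≤ M)
    (hδφ : ∀ x ∈ D, δ ≤ φ x) (hφ : ∀ x ∈ D, Iop d a b c ν φ x + l * φ x ≤ 0)
    (hδ : 0 < δ) (hr : r < l) :
    ∃ ε > 0, ∀ x ∈ D, Iop d a b c ν (fun y => φ y + ε) x + r * (φ x + ε) ≤ 0 := by
  obtain ⟨ε, hε, hεM⟩ := exists_pos_mul_lt (mul_pos (sub_pos.mpr hr) hδ) (M + r)
  refine ⟨ε, hε, fun x hx => ?_⟩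
  have hgap : (l - r) * δ ≤ (l - r) * φ x := mul_le_mul_of_nonneg_left (hδφ x hx) (by linarith)
  have hcε : c x * ε ≤ M * ε := mul_le_mul_of_nonneg_right (hM x hx) hε.le
  rw [Iop_add_const]
  linarith [hφ x hx]

end

theorem lamPPD_relaxed_general (d : ℕ)
    (a : EuclideanSpace ℝ (Fin d) → Matrix (Fin d) (Fin d) ℝ)
    (b : EuclideanSpace ℝ (Fin d) → EuclideanSpace ℝ (Fin d))
    (c : EuclideanSpace ℝ (Fin d) → ℝ)
    (ν : EuclideanSpace ℝ (Fin d) → Measure (EuclideanSpace ℝ (Fin d)))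
    (D : Set (EuclideanSpace ℝ (Fin d)))
    (hc : ∃ M : ℝ, ∀ x ∈ D, c x ≤ M) :
    lamPPD d (Iop d a b c ν) D =
      sSup (Real.toEReal '' {l : ℝ | ∃ φ : EuclideanSpace ℝ (Fin d) → ℝ,
        Continuous φ ∧ (∀ x, 0 ≤ φ x) ∧ ContDiffOn ℝ 2 φ D ∧
        (∃ δ > (0:ℝ), ∀ x ∈ D, δ ≤ φ x) ∧
        ∀ x ∈ D, Iop d a b c ν φ x + l * φ x ≤ 0}) := by
  obtain ⟨M, hM⟩ := hc
  refine EReal.sSup_image_coe_eq_of_subset_of_forall_lt ?_ ?_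
  · rintro l ⟨φ, hcont, hcd, ⟨δ, hδ, hδφ⟩, hφ⟩
    exact ⟨φ, hcont, fun x => hδ.le.trans (hδφ x), hcd, ⟨δ, hδ, fun x _ => hδφ x⟩, hφ⟩
  · rintro l ⟨φ, hcont, hnonneg, hcd, ⟨δ, hδ, hδφ⟩, hφ⟩ r hr
    obtain ⟨ε, hε, hεφ⟩ := exists_pos_Iop_add_const_add_mul_nonpos hM hδφ hφ hδ hr
    exact ⟨fun y => φ y + ε, hcont.add continuous_const, hcd.add contDiffOn_const,
      ⟨ε, hε, fun y => le_add_of_nonneg_left (hnonneg y)⟩, hεφ⟩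

/-- Remark after Theorem 2.3: if `sup_D c < ∞`, then in the definition of
`λ''(I, D)` the requirement `inf_{ℝ^d} φ > 0` can be relaxed to `φ ≥ 0` on `ℝ^d` together with
`inf_D φ > 0`, without changing the value. -/
theorem lamPPD_relaxed (d : ℕ) (hd : 1 ≤ d)
    (a : EuclideanSpace ℝ (Fin d) → Matrix (Fin d) (Fin d) ℝ)
    (b : EuclideanSpace ℝ (Fin d) → EuclideanSpace ℝ (Fin d))
    (c : EuclideanSpace ℝ (Fin d) → ℝ)
    (ν : EuclideanSpace ℝ (Fin d) → Measure (EuclideanSpace ℝ (Fin d)))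
    (H : StandardAssumptions d a b c ν)
    (D : Set (EuclideanSpace ℝ (Fin d))) (hD : IsOpen D)
    (hc : ∃ M : ℝ, ∀ x ∈ D, c x ≤ M) :
    lamPPD d (Iop d a b c ν) D =
      sSup (Real.toEReal '' {l : ℝ | ∃ φ : EuclideanSpace ℝ (Fin d) → ℝ,
        Continuous φ ∧ (∀ x, 0 ≤ φ x) ∧ ContDiffOn ℝ 2 φ D ∧
        (∃ δ > (0:ℝ), ∀ x ∈ D, δ ≤ φ x) ∧
        ∀ x ∈ D, Iop d a b c ν φ x + l * φ x ≤ 0}) :=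
  lamPPD_relaxed_general d a b c ν D hc

end
end

section
/- Exponential barrier estimate (display (ET2.1A) in the proof of Theorem 2.1(ii)). Let σ > 0 and assume: sup_{ℝ^d} ‖a(x)‖ < ∞ (operator norm); sup_{x≠0} b(x)·x/|x| < ∞; sup_{ℝ^d} c < ∞; there is r_∘ > 0 with supp ν(x,·) ⊆ B_{r_∘} for all x ∈ ℝ^d; and sup_{ℝ^d} ν(x,ℝ^d) < ∞. Then there exists a constant C₁ > 0 such that, with χ(x) := e^{σ‖x‖} (which is twice continuously differentiable on {‖x‖ ≥ 1}), one has I χ(x) ≤ C₁ χ(x) for every x with ‖x‖ ≥ 1. -/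
open MeasureTheory Metric Set

noncomputable section

/-!
Away from the origin `χ(x) = e^{σ‖x‖}` is smooth, with `∇χ = σ χ x/‖x‖` and
`∇²χ = σ χ ((σ - 1/‖x‖) x̂ x̂ᵀ + I/‖x‖)`. Hence for `‖x‖ ≥ 1` every second partial derivative of
`χ` is at most `σ(σ + 2) χ`, and the drift term equals `σ χ b(x)·x/‖x‖`. A jump of length less
than `r₀` multiplies `χ` by at most `e^{σ r₀}`. So each of the four terms of `I χ` is a bounded
multiple of `χ`.
-/

open Real

section ExpNorm

variable {E : Type*} [NormedAddCommGroup E] [InnerProductSpace ℝ E] {x : E}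

theorem hasFDerivAt_norm_of_ne_zero (hx : x ≠ 0) :
    HasFDerivAt (fun y : E => ‖y‖) (‖x‖⁻¹ • innerSL ℝ x) x := by
  have hsq := ((hasStrictFDerivAt_norm_sq x).hasFDerivAt).sqrt (by positivity)
  simp only [Real.sqrt_sq (norm_nonneg _)] at hsq
  refine hsq.congr_fderiv ?_
  rw [← Nat.cast_smul_eq_nsmul ℝ, smul_smul]
  congr 1
  field_simp
  norm_num

theorem hasFDerivAt_exp_mul_norm (σ : ℝ) (hx : x ≠ 0) :
    HasFDerivAt (fun y : E => exp (σ * ‖y‖)) ((σ * exp (σ * ‖x‖) / ‖x‖) • innerSL ℝ x) x := by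
  refine (((hasFDerivAt_norm_of_ne_zero hx).const_mul σ).exp).congr_fderiv ?_
  rw [smul_smul, smul_smul]
  congr 1
  ring

theorem fderiv_exp_mul_norm_apply (σ : ℝ) (hx : x ≠ 0) (v : E) :
    fderiv ℝ (fun y : E => exp (σ * ‖y‖)) x v = σ * exp (σ * ‖x‖) / ‖x‖ * inner ℝ x v := by
  simp [(hasFDerivAt_exp_mul_norm σ hx).fderiv]

theorem hasFDerivAt_exp_mul_norm_div_norm (σ : ℝ) (hx : x ≠ 0) :
    HasFDerivAt (fun y : E => exp (σ * ‖y‖) / ‖y‖)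
      (((σ * ‖x‖ - 1) * exp (σ * ‖x‖) / ‖x‖ ^ 3) • innerSL ℝ x) x := by
  have hn : ‖x‖ ≠ 0 := norm_ne_zero_iff.mpr hx
  have hφ : HasDerivAt (fun r => exp (σ * r) / r)
      ((exp (σ * ‖x‖) * (σ * 1) * ‖x‖ - exp (σ * ‖x‖) * 1) / ‖x‖ ^ 2) ‖x‖ :=
    (((hasDerivAt_id _).const_mul σ).exp).div (hasDerivAt_id _) hn
  refine (hφ.comp_hasFDerivAt x (hasFDerivAt_norm_of_ne_zero hx)).congr_fderiv ?_
  rw [smul_smul]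
  congr 1
  field_simp

theorem fderiv_fderiv_exp_mul_norm_apply (σ : ℝ) (hx : x ≠ 0) (v w : E) :
    fderiv ℝ (fun y => fderiv ℝ (fun z : E => exp (σ * ‖z‖)) y v) x w =
      σ * exp (σ * ‖x‖) *
        ((σ * ‖x‖ - 1) / ‖x‖ ^ 3 * (inner ℝ x v * inner ℝ x w) + inner ℝ v w / ‖x‖) := by
  have hev : (fun y => fderiv ℝ (fun z : E => exp (σ * ‖z‖)) y v) =ᶠ[nhds x]
      fun y => σ * (exp (σ * ‖y‖) / ‖y‖ * innerSL ℝ v y) := by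
    filter_upwards [isOpen_ne.mem_nhds hx] with y hy
    rw [fderiv_exp_mul_norm_apply σ hy, innerSL_apply_apply, real_inner_comm]
    ring
  have hderiv : HasFDerivAt (fun y => σ * (exp (σ * ‖y‖) / ‖y‖ * innerSL ℝ v y)) _ x :=
    ((hasFDerivAt_exp_mul_norm_div_norm σ hx).mul (innerSL ℝ v).hasFDerivAt).const_mul σ
  rw [hev.fderiv_eq, hderiv.fderiv]
  simp only [smul_apply, add_apply, innerSL_apply_apply, smul_eq_mul]
  rw [real_inner_comm v x]
  ring

theorem abs_fderiv_fderiv_exp_mul_norm_le {σ : ℝ} (hσ : 0 ≤ σ) (hx : 1 ≤ ‖x‖) (v w : E) :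
    |fderiv ℝ (fun y => fderiv ℝ (fun z : E => exp (σ * ‖z‖)) y v) x w| ≤
      σ * (σ + 2) * exp (σ * ‖x‖) * (‖v‖ * ‖w‖) := by
  have hx0 : 0 < ‖x‖ := one_pos.trans_le hx
  rw [fderiv_fderiv_exp_mul_norm_apply σ (norm_pos_iff.mp hx0), abs_mul,
    abs_of_nonneg (by positivity : 0 ≤ σ * exp (σ * ‖x‖))]
  have hradial : |(σ * ‖x‖ - 1) / ‖x‖ ^ 3 * (inner ℝ x v * inner ℝ x w)| ≤ (σ + 1) * (‖v‖ * ‖w‖) :=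
    calc |(σ * ‖x‖ - 1) / ‖x‖ ^ 3 * (inner ℝ x v * inner ℝ x w)|
        ≤ (σ * ‖x‖ + 1) / ‖x‖ ^ 3 * (‖x‖ ^ 2 * (‖v‖ * ‖w‖)) := by
          rw [abs_mul, abs_div, abs_of_pos (by positivity : 0 < ‖x‖ ^ 3)]
          gcongr ?_ / _ * ?_
          · exact (abs_sub _ _).trans (by rw [abs_one, abs_of_nonneg (by positivity)])
          · calc |inner ℝ x v * inner ℝ x w| ≤ (‖x‖ * ‖v‖) * (‖x‖ * ‖w‖) := by
                  rw [abs_mul]; gcongr <;> exact abs_real_inner_le_norm _ _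
              _ = ‖x‖ ^ 2 * (‖v‖ * ‖w‖) := by ring
      _ = (σ + ‖x‖⁻¹) * (‖v‖ * ‖w‖) := by field_simp
      _ ≤ (σ + 1) * (‖v‖ * ‖w‖) := by gcongr; exact inv_le_one_of_one_le₀ hx
  have htangential : |inner ℝ v w / ‖x‖| ≤ ‖v‖ * ‖w‖ := by
    rw [abs_div, abs_of_pos hx0]
    exact (div_le_self (abs_nonneg _) hx).trans (abs_real_inner_le_norm v w)
  calc σ * exp (σ * ‖x‖) *
        |(σ * ‖x‖ - 1) / ‖x‖ ^ 3 * (inner ℝ x v * inner ℝ x w) + inner ℝ v w / ‖x‖|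
      ≤ σ * exp (σ * ‖x‖) * ((σ + 1) * (‖v‖ * ‖w‖) + ‖v‖ * ‖w‖) := by
        gcongr
        exact (abs_add_le _ _).trans (add_le_add hradial htangential)
    _ = σ * (σ + 2) * exp (σ * ‖x‖) * (‖v‖ * ‖w‖) := by ring

theorem fderiv_exp_mul_norm_apply_le {σ M : ℝ} (hσ : 0 ≤ σ) (hx : x ≠ 0) {v : E}
    (hv : inner ℝ v x / ‖x‖ ≤ M) :
    fderiv ℝ (fun y : E => exp (σ * ‖y‖)) x v ≤ σ * M * exp (σ * ‖x‖) := by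
  rw [fderiv_exp_mul_norm_apply σ hx, real_inner_comm]
  calc σ * exp (σ * ‖x‖) / ‖x‖ * inner ℝ v x = σ * exp (σ * ‖x‖) * (inner ℝ v x / ‖x‖) := by ring
    _ ≤ σ * exp (σ * ‖x‖) * M := by gcongr
    _ = σ * M * exp (σ * ‖x‖) := by ring

end ExpNorm

namespace Matrix

variable {n : Type*} [Fintype n] [DecidableEq n]

theorem abs_apply_le_norm_toEuclideanCLM (A : Matrix n n ℝ) (i j : n) :
    |A i j| ≤ ‖(toEuclideanCLM (𝕜 := ℝ) A : EuclideanSpace ℝ n →L[ℝ] EuclideanSpace ℝ n)‖ := by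
  set T : EuclideanSpace ℝ n →L[ℝ] EuclideanSpace ℝ n := toEuclideanCLM (𝕜 := ℝ) A
  have hcol : T (EuclideanSpace.single j 1) i = A i j := by
    simp [T, Matrix.mulVec_single]
  calc |A i j| = ‖T (EuclideanSpace.single j 1) i‖ := by rw [hcol, Real.norm_eq_abs]
    _ ≤ ‖T (EuclideanSpace.single j 1)‖ := PiLp.norm_apply_le _ i
    _ ≤ ‖T‖ := by simpa using T.le_opNorm (EuclideanSpace.single j 1)

theorem sum_sum_mul_le_card_sq_mul_norm_toEuclideanCLM (A : Matrix n n ℝ) {H : n → n → ℝ}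
    {K : ℝ} (hH : ∀ i j, |H i j| ≤ K) :
    ∑ i, ∑ j, A i j * H i j ≤
      Fintype.card n ^ 2 *
        ‖(toEuclideanCLM (𝕜 := ℝ) A : EuclideanSpace ℝ n →L[ℝ] EuclideanSpace ℝ n)‖ * K := by
  calc ∑ i, ∑ j, A i j * H i j
      ≤ ∑ _i : n, ∑ _j : n,
          ‖(toEuclideanCLM (𝕜 := ℝ) A : EuclideanSpace ℝ n →L[ℝ] EuclideanSpace ℝ n)‖ * K := by
        refine Finset.sum_le_sum fun i _ => Finset.sum_le_sum fun j _ => ?_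
        calc A i j * H i j ≤ |A i j| * |H i j| := by rw [← abs_mul]; exact le_abs_self _
          _ ≤ _ := mul_le_mul (abs_apply_le_norm_toEuclideanCLM A i j) (hH i j) (abs_nonneg _)
              (norm_nonneg _)
    _ = _ := by simp only [Finset.sum_const, Finset.card_univ, nsmul_eq_mul]; ring

end Matrix

theorem integral_exp_mul_norm_add_sub_le {E : Type*} [NormedAddCommGroup E] [MeasurableSpace E]
    [OpensMeasurableSpace E] (μ : Measure E) [IsFiniteMeasure μ] {σ r : ℝ} (hσ : 0 ≤ σ)
    (hμ : μ (ball 0 r)ᶜ = 0) (x : E) :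
    ∫ z, (exp (σ * ‖x + z‖) - exp (σ * ‖x‖)) ∂μ ≤
      μ.real univ * (exp (σ * r) - 1) * exp (σ * ‖x‖) := by
  have hshift : ∀ᵐ z ∂μ, exp (σ * ‖x + z‖) ≤ exp (σ * r) * exp (σ * ‖x‖) := by
    filter_upwards [mem_ae_iff.mpr hμ] with z hz
    rw [← exp_add, exp_le_exp, ← mul_add]
    gcongr
    exact (norm_add_le x z).trans (by rw [mem_ball_zero_iff] at hz; linarith)
  have hint : Integrable (fun z => exp (σ * ‖x + z‖) - exp (σ * ‖x‖)) μ := by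
    refine .of_bound (by fun_prop : Continuous _).aestronglyMeasurable
      (exp (σ * r) * exp (σ * ‖x‖) + exp (σ * ‖x‖)) ?_
    filter_upwards [hshift] with z hz
    rw [norm_eq_abs, abs_sub_le_iff]
    constructor <;> linarith [exp_pos (σ * ‖x‖), exp_pos (σ * ‖x + z‖)]
  calc ∫ z, (exp (σ * ‖x + z‖) - exp (σ * ‖x‖)) ∂μ
      ≤ ∫ _, (exp (σ * r) - 1) * exp (σ * ‖x‖) ∂μ := by
        refine integral_mono_ae hint (integrable_const _) ?_
        filter_upwards [hshift] with z hz
        linarith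
    _ = μ.real univ * (exp (σ * r) - 1) * exp (σ * ‖x‖) := by
        rw [integral_const, smul_eq_mul, mul_assoc]

theorem sum_sum_mul_fderiv_fderiv_exp_mul_norm_le {d : ℕ} (A : Matrix (Fin d) (Fin d) ℝ) {σ : ℝ}
    (hσ : 0 ≤ σ) {x : EuclideanSpace ℝ (Fin d)} (hx : 1 ≤ ‖x‖) :
    ∑ i, ∑ j, A i j *
        fderiv ℝ (fun y => fderiv ℝ (fun z : EuclideanSpace ℝ (Fin d) => exp (σ * ‖z‖)) y
          (EuclideanSpace.single j 1)) x (EuclideanSpace.single i 1) ≤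
      d ^ 2 * ‖(Matrix.toEuclideanCLM (𝕜 := ℝ) A :
        EuclideanSpace ℝ (Fin d) →L[ℝ] EuclideanSpace ℝ (Fin d))‖ *
        (σ * (σ + 2) * exp (σ * ‖x‖)) := by
  simpa using A.sum_sum_mul_le_card_sq_mul_norm_toEuclideanCLM fun i j => by
    simpa using abs_fderiv_fderiv_exp_mul_norm_le hσ hx
      (EuclideanSpace.single j (1 : ℝ)) (EuclideanSpace.single i (1 : ℝ))

theorem exponential_barrier_general (d : ℕ)
    (a : EuclideanSpace ℝ (Fin d) → Matrix (Fin d) (Fin d) ℝ)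
    (b : EuclideanSpace ℝ (Fin d) → EuclideanSpace ℝ (Fin d))
    (c : EuclideanSpace ℝ (Fin d) → ℝ)
    (ν : EuclideanSpace ℝ (Fin d) → Measure (EuclideanSpace ℝ (Fin d)))
    (H : StandardAssumptions d a b c ν)
    (σ : ℝ) (hσ : 0 < σ)
    (ha_bdd : ∃ M : ℝ, ∀ x, ‖(Matrix.toEuclideanCLM (𝕜 := ℝ) (a x) :
      EuclideanSpace ℝ (Fin d) →L[ℝ] EuclideanSpace ℝ (Fin d))‖ ≤ M)
    (hb_bdd : ∃ M : ℝ, ∀ x : EuclideanSpace ℝ (Fin d), x ≠ 0 → (inner ℝ (b x) x : ℝ) / ‖x‖ ≤ M)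
    (hc_bdd : ∃ M : ℝ, ∀ x, c x ≤ M)
    (hsupp : ∃ r₀ : ℝ, 0 < r₀ ∧ ∀ x, ν x (ball (0 : EuclideanSpace ℝ (Fin d)) r₀)ᶜ = 0)
    (hmass : ∃ M : ℝ, ∀ x, (ν x Set.univ).toReal ≤ M) :
    ∃ C₁ : ℝ, 0 < C₁ ∧ ∀ x : EuclideanSpace ℝ (Fin d), 1 ≤ ‖x‖ →
      Iop d a b c ν (fun y => Real.exp (σ * ‖y‖)) x ≤ C₁ * Real.exp (σ * ‖x‖) := by
  obtain ⟨Ma, hMa⟩ := ha_bdd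
  obtain ⟨Mb, hMb⟩ := hb_bdd
  obtain ⟨Mc, hMc⟩ := hc_bdd
  obtain ⟨r₀, hr₀pos, hr₀⟩ := hsupp
  obtain ⟨Mν, hMν⟩ := hmass
  set C := d ^ 2 * Ma * (σ * (σ + 2)) + σ * Mb + Mc + Mν * (exp (σ * r₀) - 1)
  refine ⟨max C 1, one_pos.trans_le (le_max_right _ _), fun x hx => ?_⟩
  have := H.nu_fin x
  have hx0 : x ≠ 0 := norm_pos_iff.mp (one_pos.trans_le hx)
  have hχ : 0 < exp (σ * ‖x‖) := exp_pos _
  have hjump : 0 ≤ exp (σ * r₀) - 1 := sub_nonneg.mpr (one_le_exp (by positivity))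
  have hdiffusion := (sum_sum_mul_fderiv_fderiv_exp_mul_norm_le (a x) hσ.le hx).trans
    (by gcongr; exact hMa x : _ ≤ d ^ 2 * Ma * (σ * (σ + 2) * exp (σ * ‖x‖)))
  have hdrift := fderiv_exp_mul_norm_apply_le hσ.le hx0 (hMb x hx0)
  have hpotential := mul_le_mul_of_nonneg_right (hMc x) hχ.le
  have hjumps := (integral_exp_mul_norm_add_sub_le (ν x) hσ.le (hr₀ x) x).trans
    (by gcongr; exact hMν x : _ ≤ Mν * (exp (σ * r₀) - 1) * exp (σ * ‖x‖))
  calc Iop d a b c ν (fun y => exp (σ * ‖y‖)) x ≤ C * exp (σ * ‖x‖) := by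
        unfold Iop; beta_reduce; linarith
    _ ≤ max C 1 * exp (σ * ‖x‖) := by gcongr; exact le_max_left _ _

/-- display (ET2.1A) in the proof of Theorem 2.1(ii): exponential barrier
estimate `I χ ≤ C₁ χ` for `χ(x) = e^{σ‖x‖}` outside the unit ball. -/
theorem exponential_barrier (d : ℕ) (hd : 1 ≤ d)
    (a : EuclideanSpace ℝ (Fin d) → Matrix (Fin d) (Fin d) ℝ)
    (b : EuclideanSpace ℝ (Fin d) → EuclideanSpace ℝ (Fin d))
    (c : EuclideanSpace ℝ (Fin d) → ℝ)
    (ν : EuclideanSpace ℝ (Fin d) → Measure (EuclideanSpace ℝ (Fin d)))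
    (H : StandardAssumptions d a b c ν)
    (σ : ℝ) (hσ : 0 < σ)
    (ha_bdd : ∃ M : ℝ, ∀ x, ‖(Matrix.toEuclideanCLM (𝕜 := ℝ) (a x) :
      EuclideanSpace ℝ (Fin d) →L[ℝ] EuclideanSpace ℝ (Fin d))‖ ≤ M)
    (hb_bdd : ∃ M : ℝ, ∀ x : EuclideanSpace ℝ (Fin d), x ≠ 0 → (inner ℝ (b x) x : ℝ) / ‖x‖ ≤ M)
    (hc_bdd : ∃ M : ℝ, ∀ x, c x ≤ M)
    (hsupp : ∃ r₀ : ℝ, 0 < r₀ ∧ ∀ x, ν x (ball (0 : EuclideanSpace ℝ (Fin d)) r₀)ᶜ = 0)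
    (hmass : ∃ M : ℝ, ∀ x, (ν x Set.univ).toReal ≤ M) :
    ∃ C₁ : ℝ, 0 < C₁ ∧ ∀ x : EuclideanSpace ℝ (Fin d), 1 ≤ ‖x‖ →
      Iop d a b c ν (fun y => Real.exp (σ * ‖y‖)) x ≤ C₁ * Real.exp (σ * ‖x‖) :=
  exponential_barrier_general d a b c ν H σ hσ ha_bdd hb_bdd hc_bdd hsupp hmass

end
end
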